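/- arXiv:2308.16016 — 2 statements merged into one kernel-verified Lean document; each statement's English description precedes it below -/
import Mathlib

section
/- For natural numbers N and M with 0 < M < N, letting P = M/N and H(P) = -P log P - (1-P) log(1-P), the binomial coefficient satisfies √(1/(8 P (1-P) N)) · e^{N H(P)} ≤ C(N, M) ≤ √(1/(2π P (1-P) N)) · e^{N H(P)}. -/
open Real

section Aux
open Stirling

private lemma sqrt_pi_le_stirling' (n : ℕ) (hn : 1 ≤ n) : Real.sqrt π ≤ stirlingSeq n := by
  obtain ⟨m, rfl⟩ := Nat.exists_eq_add_of_le hn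
  have h : Filter.Tendsto (stirlingSeq ∘ Nat.succ) Filter.atTop (nhds (Real.sqrt π)) :=
    tendsto_stirlingSeq_sqrt_pi.comp (Filter.tendsto_add_atTop_nat 1)
  simpa [Nat.add_comm] using stirlingSeq'_antitone.le_of_tendsto h m

private lemma stirling_antitone' {m n : ℕ} (hm : 1 ≤ m) (hmn : m ≤ n) :
    stirlingSeq n ≤ stirlingSeq m := by
  obtain ⟨a, rfl⟩ := Nat.exists_eq_add_of_le hm
  obtain ⟨b, rfl⟩ := Nat.exists_eq_add_of_le hmn
  have := stirlingSeq'_antitone (Nat.le_add_right a b)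
  simpa [Function.comp, Nat.succ_eq_add_one, Nat.add_comm, Nat.add_assoc,
    Nat.add_left_comm] using this

private lemma stirling_pos' (n : ℕ) (hn : 1 ≤ n) : 0 < stirlingSeq n := by
  obtain ⟨m, rfl⟩ := Nat.exists_eq_add_of_le hn
  simpa [Nat.add_comm] using stirlingSeq'_pos m

private lemma stirling_two' : stirlingSeq 2 = Real.exp 1 ^ 2 / 4 := by
  have h2 : Real.sqrt 4 = 2 := by
    rw [show (4:ℝ) = 2^2 by norm_num, Real.sqrt_sq (by norm_num)]
  rw [stirlingSeq]
  norm_num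
  rw [show rexp 2 = rexp 1 ^ 2 by rw [← Real.exp_nat_mul]; norm_num]
  rw [div_pow, div_eq_div_iff (by positivity) (by norm_num)]
  field_simp
  ring

private lemma stirling_three' : stirlingSeq 3 = Real.sqrt 6 * Real.exp 1 ^ 3 / 27 := by
  have h6 : Real.sqrt 6 * Real.sqrt 6 = 6 := Real.mul_self_sqrt (by norm_num)
  have he := Real.exp_pos 1
  rw [stirlingSeq]
  norm_num [Nat.factorial]
  rw [show rexp 3 = rexp 1 ^ 3 by rw [← Real.exp_nat_mul]; norm_num]
  rw [div_pow, div_eq_div_iff (by positivity) (by norm_num)]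
  field_simp
  linear_combination (-27) * h6

private lemma exp_one_sq_lt' : Real.exp 1 ^ 2 < 7.3890561 := by
  nlinarith [Real.exp_one_lt_d9, Real.exp_pos 1]

private lemma exp_one_pow_four_lt' : Real.exp 1 ^ 4 < 54.6 := by
  have h := exp_one_sq_lt'
  have h0 : (0:ℝ) < Real.exp 1 ^ 2 := by positivity
  nlinarith [h, h0]

private lemma sqrt_pi_gt' : (1.772 : ℝ) < Real.sqrt π := by
  nlinarith [Real.sq_sqrt Real.pi_pos.le, Real.sqrt_nonneg π, Real.pi_gt_d6]

private lemma key_one' (K : ℕ) (hK : 1 ≤ K) :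
    stirlingSeq 1 * stirlingSeq K ≤ 2 * stirlingSeq (1 + K) := by
  have h2 : Real.sqrt 2 * Real.sqrt 2 = 2 := Real.mul_self_sqrt (by norm_num)
  have h2n : (0:ℝ) ≤ Real.sqrt 2 := Real.sqrt_nonneg 2
  have h6 : Real.sqrt 6 * Real.sqrt 6 = 6 := Real.mul_self_sqrt (by norm_num)
  have h6n : (0:ℝ) ≤ Real.sqrt 6 := Real.sqrt_nonneg 6
  have he := Real.exp_pos 1
  match K, hK with
  | 1, _ =>
    rw [stirlingSeq_one, show (1+1 : ℕ) = 2 from rfl, stirling_two']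
    rw [div_mul_div_comm, div_le_iff₀ (by positivity)]
    nlinarith [pow_pos he 2]
  | 2, _ =>
    rw [stirlingSeq_one, stirling_two', show (1+2 : ℕ) = 3 from rfl, stirling_three']
    rw [div_mul_div_comm, div_le_iff₀ (by positivity)]
    have h26 : (3.46:ℝ) ≤ Real.sqrt 2 * Real.sqrt 6 := by
      nlinarith [mul_nonneg h2n h6n]
    nlinarith [pow_pos he 3, mul_nonneg h2n h6n,
      mul_le_mul_of_nonneg_left h26 (pow_pos he 3).le]
  | (n+3), _ =>
    have hs3 : stirlingSeq (n+3) ≤ stirlingSeq 3 :=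
      stirling_antitone' (by norm_num) (by omega)
    have hsp : Real.sqrt π ≤ stirlingSeq (1 + (n+3)) :=
      sqrt_pi_le_stirling' _ (by omega)
    have h1pos : (0:ℝ) < stirlingSeq 1 := stirling_pos' 1 le_rfl
    calc stirlingSeq 1 * stirlingSeq (n+3) ≤ stirlingSeq 1 * stirlingSeq 3 :=
          mul_le_mul_of_nonneg_left hs3 h1pos.le
      _ ≤ 2 * Real.sqrt π := by
          rw [stirlingSeq_one, stirling_three']
          rw [div_mul_div_comm, div_le_iff₀ (by positivity)]
          have he4 := exp_one_pow_four_lt'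
          have hsp' := sqrt_pi_gt'
          have hs2lb : (1.414:ℝ) ≤ Real.sqrt 2 := by nlinarith
          have hs6ub : Real.sqrt 6 ≤ 2.4495 := by nlinarith
          have hspn : (0:ℝ) ≤ Real.sqrt π := Real.sqrt_nonneg π
          nlinarith [pow_pos he 4,
            mul_le_mul hs6ub he4.le (by positivity) (by norm_num : (0:ℝ) ≤ 2.4495),
            mul_le_mul hs2lb hsp'.le (by norm_num) h2n]
      _ ≤ 2 * stirlingSeq (1 + (n+3)) := by linarith

private lemma key_ineq' (M K : ℕ) (hM : 1 ≤ M) (hK : 1 ≤ K) :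
    stirlingSeq M * stirlingSeq K ≤ 2 * stirlingSeq (M + K) := by
  rcases eq_or_lt_of_le hM with h1 | h1
  · rw [← h1]; exact key_one' K hK
  rcases eq_or_lt_of_le hK with h2 | h2
  · rw [← h2, mul_comm, Nat.add_comm]; exact key_one' M hM
  have hM2 : stirlingSeq M ≤ stirlingSeq 2 := stirling_antitone' (by norm_num) h1
  have hK2 : stirlingSeq K ≤ stirlingSeq 2 := stirling_antitone' (by norm_num) h2
  have hMp : (0:ℝ) < stirlingSeq M := stirling_pos' M hM
  have hKp : (0:ℝ) < stirlingSeq K := stirling_pos' K hK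
  have hsp : Real.sqrt π ≤ stirlingSeq (M + K) := sqrt_pi_le_stirling' _ (by omega)
  calc stirlingSeq M * stirlingSeq K ≤ stirlingSeq 2 * stirlingSeq 2 :=
        mul_le_mul hM2 hK2 hKp.le (hMp.le.trans hM2)
    _ ≤ 2 * Real.sqrt π := by
        rw [stirling_two']
        have := exp_one_pow_four_lt'
        have := sqrt_pi_gt'
        have h0 : (0:ℝ) < Real.exp 1 ^ 2 := by positivity
        nlinarith
    _ ≤ 2 * stirlingSeq (M + K) := by linarith

private lemma factorial_eq' (n : ℕ) (hn : 1 ≤ n) :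
    ((n.factorial : ℕ) : ℝ) = stirlingSeq n * (Real.sqrt (2 * n) * ((n : ℝ) / Real.exp 1) ^ n) := by
  have hn' : (0:ℝ) < n := by exact_mod_cast hn
  have hd : (0:ℝ) < Real.sqrt (2 * n) * ((n : ℝ) / Real.exp 1) ^ n := by positivity
  rw [stirlingSeq, div_mul_cancel₀ _ hd.ne']

end Aux

/-- Entropy bounds on the binomial coefficient: for `0 < M < N` and `P = M/N`,
`√(1/(8P(1-P)N))·e^{N·H(P)} ≤ C(N,M) ≤ √(1/(2πP(1-P)N))·e^{N·H(P)}`,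
where `H(P) = -P log P - (1-P) log(1-P)`. -/
theorem choose_entropy_bounds (N M : ℕ) (hM : 0 < M) (hMN : M < N) :
    Real.sqrt (1 / (8 * ((M : ℝ) / N) * (1 - (M : ℝ) / N) * N)) *
        Real.exp ((N : ℝ) * (-((M : ℝ) / N) * Real.log ((M : ℝ) / N)
          - (1 - (M : ℝ) / N) * Real.log (1 - (M : ℝ) / N)))
      ≤ (N.choose M : ℝ) ∧
    (N.choose M : ℝ) ≤
      Real.sqrt (1 / (2 * Real.pi * ((M : ℝ) / N) * (1 - (M : ℝ) / N) * N)) *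
        Real.exp ((N : ℝ) * (-((M : ℝ) / N) * Real.log ((M : ℝ) / N)
          - (1 - (M : ℝ) / N) * Real.log (1 - (M : ℝ) / N))) := by
  set K : ℕ := N - M with hKdef
  have hK : 0 < K := by omega
  have hNMK : N = M + K := by omega
  have hm : (0:ℝ) < M := by exact_mod_cast hM
  have hk : (0:ℝ) < K := by exact_mod_cast hK
  have hn : (0:ℝ) < N := by exact_mod_cast (by omega : 0 < N)
  have hnc : (N:ℝ) = (M:ℝ) + (K:ℝ) := by exact_mod_cast congrArg (Nat.cast : ℕ → ℝ) hNMK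
  have h1m : 1 - (M:ℝ)/N = (K:ℝ)/N := by
    field_simp
    linarith [hnc]
  -- the exponential factor equals N^N / (M^M K^K)
  have hE : Real.exp ((N : ℝ) * (-((M : ℝ) / N) * Real.log ((M : ℝ) / N)
          - (1 - (M : ℝ) / N) * Real.log (1 - (M : ℝ) / N)))
      = (N:ℝ)^N / ((M:ℝ)^M * (K:ℝ)^K) := by
    rw [h1m]
    have harg : (N : ℝ) * (-((M : ℝ) / N) * Real.log ((M : ℝ) / N)
          - ((K:ℝ)/N) * Real.log ((K:ℝ)/N))
        = (N:ℝ) * Real.log N - ((M:ℝ) * Real.log M + (K:ℝ) * Real.log K) := by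
      rw [Real.log_div hm.ne' hn.ne', Real.log_div hk.ne' hn.ne']
      field_simp
      linear_combination (-Real.log N) * hnc
    rw [harg, Real.exp_sub, Real.exp_add, Real.exp_nat_mul, Real.exp_nat_mul,
      Real.exp_nat_mul, Real.exp_log hn, Real.exp_log hm, Real.exp_log hk]
  have hfN := factorial_eq' N (by omega)
  have hfM := factorial_eq' M hM
  have hfK := factorial_eq' K hK
  have hsN : (0:ℝ) < Stirling.stirlingSeq N := stirling_pos' N (by omega)
  have hsM : (0:ℝ) < Stirling.stirlingSeq M := stirling_pos' M hM
  have hsK : (0:ℝ) < Stirling.stirlingSeq K := stirling_pos' K hK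
  have hQpos : (0:ℝ) < Real.sqrt ((N:ℝ)/(2*M*K)) := Real.sqrt_pos.mpr (by positivity)
  have hEpos : (0:ℝ) < (N:ℝ)^N / ((M:ℝ)^M * (K:ℝ)^K) := by positivity
  have hsqrt : Real.sqrt (2*(M:ℝ)) * Real.sqrt (2*(K:ℝ)) * Real.sqrt ((N:ℝ)/(2*M*K))
      = Real.sqrt (2*(N:ℝ)) := by
    rw [← Real.sqrt_mul (by positivity), ← Real.sqrt_mul (by positivity)]
    congr 1
    field_simp
  have hpowe : Real.exp 1 ^ N = Real.exp 1 ^ M * Real.exp 1 ^ K := by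
    rw [hNMK, pow_add]
  have hC : (N.choose M : ℝ) = Stirling.stirlingSeq N
        / (Stirling.stirlingSeq M * Stirling.stirlingSeq K)
      * (Real.sqrt ((N:ℝ)/(2*M*K)) * ((N:ℝ)^N / ((M:ℝ)^M * (K:ℝ)^K))) := by
    rw [Nat.cast_choose ℝ hMN.le, ← hKdef, hfN, hfM, hfK, div_pow, div_pow, div_pow,
      ← hsqrt, hpowe]
    have e1 : Real.sqrt (2*(M:ℝ)) ≠ 0 := by positivity
    have e2 : Real.sqrt (2*(K:ℝ)) ≠ 0 := by positivity
    field_simp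
  have hkey : Stirling.stirlingSeq M * Stirling.stirlingSeq K
      ≤ 2 * Stirling.stirlingSeq N := by
    have := key_ineq' M K hM hK
    rwa [← hNMK] at this
  have hanti : Stirling.stirlingSeq N ≤ Stirling.stirlingSeq M :=
    stirling_antitone' hM hMN.le
  have hKpi : Real.sqrt π ≤ Stirling.stirlingSeq K := sqrt_pi_le_stirling' K hK
  constructor
  · -- lower bound
    have hargL : 1/(8*((M:ℝ)/N)*(1-(M:ℝ)/N)*(N:ℝ)) = ((N:ℝ)/(2*M*K)) * (1/4) := by
      rw [h1m]
      field_simp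
      ring
    have hquart : Real.sqrt (1/4 : ℝ) = 1/2 := by
      rw [show (1/4:ℝ) = (1/2)^2 by norm_num, Real.sqrt_sq (by norm_num)]
    rw [hE, hargL, Real.sqrt_mul (by positivity), hquart]
    have hratio : (1:ℝ)/2 ≤ Stirling.stirlingSeq N
        / (Stirling.stirlingSeq M * Stirling.stirlingSeq K) := by
      rw [le_div_iff₀ (by positivity)]
      linarith
    calc Real.sqrt ((N:ℝ)/(2*M*K)) * (1/2) * ((N:ℝ)^N / ((M:ℝ)^M * (K:ℝ)^K))
        = (1/2) * (Real.sqrt ((N:ℝ)/(2*M*K)) * ((N:ℝ)^N / ((M:ℝ)^M * (K:ℝ)^K))) := by ring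
      _ ≤ Stirling.stirlingSeq N / (Stirling.stirlingSeq M * Stirling.stirlingSeq K)
          * (Real.sqrt ((N:ℝ)/(2*M*K)) * ((N:ℝ)^N / ((M:ℝ)^M * (K:ℝ)^K))) :=
          mul_le_mul_of_nonneg_right hratio (by positivity)
      _ = (N.choose M : ℝ) := hC.symm
  · -- upper bound
    have hargU : 1/(2*π*((M:ℝ)/N)*(1-(M:ℝ)/N)*(N:ℝ)) = ((N:ℝ)/(2*M*K)) * (1/π) := by
      rw [h1m]
      field_simp
    have hpisqrt : Real.sqrt (1/π : ℝ) = 1/Real.sqrt π := by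
      rw [one_div, one_div, Real.sqrt_inv]
    have hsppos : (0:ℝ) < Real.sqrt π := Real.sqrt_pos.mpr Real.pi_pos
    rw [hE, hargU, Real.sqrt_mul (by positivity), hpisqrt]
    have hratio : Stirling.stirlingSeq N
        / (Stirling.stirlingSeq M * Stirling.stirlingSeq K) ≤ 1/Real.sqrt π := by
      rw [div_le_div_iff₀ (by positivity) hsppos]
      nlinarith [mul_le_mul hanti hKpi (Real.sqrt_nonneg π) hsM.le]
    calc (N.choose M : ℝ)
        = Stirling.stirlingSeq N / (Stirling.stirlingSeq M * Stirling.stirlingSeq K)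
          * (Real.sqrt ((N:ℝ)/(2*M*K)) * ((N:ℝ)^N / ((M:ℝ)^M * (K:ℝ)^K))) := hC
      _ ≤ (1/Real.sqrt π)
          * (Real.sqrt ((N:ℝ)/(2*M*K)) * ((N:ℝ)^N / ((M:ℝ)^M * (K:ℝ)^K))) :=
          mul_le_mul_of_nonneg_right hratio (by positivity)
      _ = Real.sqrt ((N:ℝ)/(2*M*K)) * (1/Real.sqrt π)
          * ((N:ℝ)^N / ((M:ℝ)^M * (K:ℝ)^K)) := by ring
end

section
/- Let X be a binomial random variable with parameters n and p, and A ∈ (p,1) with A' = (⌊An⌋+1)/n > p. Then P(X ≥ ⌊An⌋ + 1) ≤ e^{-n D(A' || p)}, where D is the binary Kullback-Leibler divergence. -/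
open Real

/-- Chernoff–Hoeffding binomial tail bound: for `X ~ Binomial(n,p)`, `A ∈ (p,1)`
and `A' = (⌊An⌋+1)/n > p`, `P(X ≥ ⌊An⌋+1) ≤ e^{-n·D(A'||p)}`. -/
theorem binomial_tail_hoeffding (n : ℕ) (p A : ℝ)
    (hp0 : 0 < p) (hp1 : p < 1) (hAp : p < A) (hA1 : A < 1) (hn : 0 < n)
    (A' : ℝ) (hA' : A' = ((⌊A * (n : ℝ)⌋₊ + 1 : ℕ) : ℝ) / n) (hA'p : p < A') :
    (∑ k ∈ Finset.Icc (⌊A * (n : ℝ)⌋₊ + 1) n,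
        (n.choose k : ℝ) * p ^ k * (1 - p) ^ (n - k))
      ≤ Real.exp (-(n : ℝ) * (A' * Real.log (A' / p)
          + (1 - A') * Real.log ((1 - A') / (1 - p)))) := by
  have hn' : (0:ℝ) < n := Nat.cast_pos.mpr hn
  set m : ℕ := ⌊A * (n : ℝ)⌋₊ + 1 with hm
  have hq : (0:ℝ) < 1 - p := by linarith
  have hmn : m ≤ n := by
    have h1 : A * n < n := by nlinarith
    have h2 : ⌊A * (n:ℝ)⌋₊ < n :=
      (Nat.floor_lt (mul_nonneg (by linarith) hn'.le)).mpr h1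
    omega
  have hA'n : A' * n = m := by
    rw [hA']; field_simp
  have hA'0 : 0 < A' := lt_trans hp0 hA'p
  have hA'1 : A' ≤ 1 := by
    rw [hA', div_le_one hn']
    exact_mod_cast hmn
  rcases eq_or_lt_of_le hA'1 with h1 | h1
  · -- A' = 1, so m = n and the sum is p^n
    have hmn2 : m = n := by
      have : (m:ℝ) = n := by rw [← hA'n, h1, one_mul]
      exact_mod_cast this
    rw [h1, hmn2, Finset.Icc_self, Finset.sum_singleton, Nat.choose_self,
      Nat.sub_self, pow_zero]
    have harg : -(n:ℝ) * (1 * Real.log (1 / p)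
        + (1 - 1) * Real.log ((1 - 1) / (1 - p))) = (n:ℝ) * Real.log p := by
      rw [one_div, Real.log_inv]; ring
    rw [harg, Real.exp_nat_mul, Real.exp_log hp0]
    norm_num
  · -- A' < 1
    have hb : 0 < 1 - A' := by linarith
    set b := 1 - A' with hbdef
    set r := A' * (1 - p) / (p * b) with hrdef
    have hr0 : 0 < r := div_pos (mul_pos hA'0 hq) (mul_pos hp0 hb)
    have hr1 : 1 ≤ r := by
      rw [hrdef, le_div_iff₀ (mul_pos hp0 hb)]
      nlinarith
    have key1 : (∑ k ∈ Finset.Icc m n, (n.choose k : ℝ) * p ^ k * (1 - p) ^ (n - k))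
        ≤ (∑ k ∈ Finset.range (n+1), (n.choose k : ℝ) * (p*r) ^ k * (1 - p) ^ (n - k)) / r ^ m := by
      rw [Finset.sum_div]
      calc (∑ k ∈ Finset.Icc m n, (n.choose k : ℝ) * p ^ k * (1 - p) ^ (n - k))
          ≤ ∑ k ∈ Finset.Icc m n, (n.choose k : ℝ) * (p*r) ^ k * (1 - p) ^ (n - k) / r ^ m := by
            apply Finset.sum_le_sum
            intro k hk
            obtain ⟨hk1, hk2⟩ := Finset.mem_Icc.mp hk
            have hrk : r ^ k = r ^ m * r ^ (k - m) := by
              rw [← pow_add]; congr 1; omega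
            have h2 : (n.choose k:ℝ) * (p*r) ^ k * (1-p) ^ (n-k) / r ^ m
                = ((n.choose k:ℝ) * p ^ k * (1-p) ^ (n-k)) * r ^ (k-m) := by
              rw [mul_pow, hrk]
              field_simp
            rw [h2]
            refine le_mul_of_one_le_right ?_ (one_le_pow₀ hr1)
            exact mul_nonneg (mul_nonneg (Nat.cast_nonneg _) (pow_nonneg hp0.le _))
              (pow_nonneg hq.le _)
        _ ≤ ∑ k ∈ Finset.range (n+1), (n.choose k : ℝ) * (p*r) ^ k * (1 - p) ^ (n - k) / r ^ m := by
            apply Finset.sum_le_sum_of_subset_of_nonneg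
            · intro k hk
              obtain ⟨hk1, hk2⟩ := Finset.mem_Icc.mp hk
              exact Finset.mem_range.mpr (by omega)
            · intro k _ _
              exact div_nonneg (mul_nonneg (mul_nonneg (Nat.cast_nonneg _)
                (pow_nonneg (mul_nonneg hp0.le hr0.le) _)) (pow_nonneg hq.le _))
                (pow_nonneg hr0.le _)
    have key2 : (∑ k ∈ Finset.range (n+1), (n.choose k : ℝ) * (p*r) ^ k * (1 - p) ^ (n - k))
        = (p * r + (1 - p)) ^ n := by
      rw [add_pow]
      apply Finset.sum_congr rfl
      intro k _
      ring
    have hprq : p * r + (1 - p) = (1 - p) / b := by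
      rw [hrdef]; field_simp; ring
    have hsum0 : 0 < p * r + (1 - p) := by positivity
    have hfin : (p * r + (1 - p)) ^ n / r ^ m
        = Real.exp (-(n : ℝ) * (A' * Real.log (A' / p) + b * Real.log (b / (1 - p)))) := by
      have hpos : 0 < (p * r + (1 - p)) ^ n / r ^ m :=
        div_pos (pow_pos hsum0 n) (pow_pos hr0 m)
      rw [← Real.exp_log hpos]
      congr 1
      rw [Real.log_div (pow_pos hsum0 n).ne' (pow_pos hr0 m).ne', Real.log_pow, Real.log_pow,
        hprq, hrdef, Real.log_div hq.ne' hb.ne',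
        Real.log_div (mul_pos hA'0 hq).ne' (mul_pos hp0 hb).ne',
        Real.log_mul hA'0.ne' hq.ne', Real.log_mul hp0.ne' hb.ne',
        Real.log_div hA'0.ne' hp0.ne', Real.log_div hb.ne' hq.ne']
      have hmr : (m : ℝ) = A' * n := hA'n.symm
      rw [hmr]
      ring
    calc _ ≤ (∑ k ∈ Finset.range (n+1), (n.choose k : ℝ) * (p*r) ^ k * (1 - p) ^ (n - k)) / r ^ m := key1
      _ = (p * r + (1 - p)) ^ n / r ^ m := by rw [key2]
      _ = _ := hfin
end
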